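/- arXiv:2206.00957 — 7 statements merged into one kernel-verified Lean document; each statement's English description precedes it below -/
import Mathlib

section
/- Let J be a metallic structure on a manifold M (J² = pJ + qI with q ≠ 0) and ∇ a linear connection. Then (∇, J) is Codazzi-coupled (i.e., (∇_X J)Y = (∇_Y J)X for all X, Y) if and only if ∇ and the J-conjugate connection ∇^J defined by ∇^J_X Y = J⁻¹(∇_X(JY)) have equal torsion tensors. -/
/-!
Writing `∇^J_X Y = J⁻¹(∇_X (JY)) = ∇_X Y + J⁻¹((∇_X J) Y)`, the torsions of `∇` and `∇^J` differ
by `J⁻¹((∇_Y J) X - (∇_X J) Y)`. Since `J⁻¹` is injective, this vanishes exactly when `(∇, J)` is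
Codazzi-coupled; the metallic identity `J² = pJ + qI` with `q ≠ 0` only serves to make
`(1/q)(J - pI)` a two-sided inverse of `J`.
-/

variable {V : Type*} [AddCommGroup V] [Module ℝ V]

/-- Torsion tensor of a connection `D` with respect to a bracket. -/
def tors (bracket D : V → V → V) (X Y : V) : V := D X Y - D Y X - bracket X Y

/-- Covariant derivative `(D_X T) Y` of a (1,1)-tensor field `T`. -/
def covT (D : V → V → V) (T : V → V) (X Y : V) : V := D X (T Y) - T (D X Y)

def conjConn (D : V → V → V) (e : V ≃ₗ[ℝ] V) (X Y : V) : V := e.symm (D X (e Y))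

theorem conjConn_eq_add_covT (D : V → V → V) (e : V ≃ₗ[ℝ] V) (X Y : V) :
    conjConn D e X Y = D X Y + e.symm (covT D e X Y) := by
  simp [conjConn, covT]

theorem tors_sub_tors_conjConn (bracket D : V → V → V) (e : V ≃ₗ[ℝ] V) (X Y : V) :
    tors bracket D X Y - tors bracket (conjConn D e) X Y =
      e.symm (covT D e Y X - covT D e X Y) := by
  simp only [tors, conjConn_eq_add_covT, map_sub]
  abel

theorem codazzi_iff_tors_eq_tors_conjConn (bracket D : V → V → V) (e : V ≃ₗ[ℝ] V) :
    (∀ X Y, covT D e X Y = covT D e Y X) ↔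
      ∀ X Y, tors bracket D X Y = tors bracket (conjConn D e) X Y := by
  refine forall₂_congr fun X Y => ?_
  rw [← sub_eq_zero (a := tors bracket D X Y), tors_sub_tors_conjConn,
    LinearEquiv.map_eq_zero_iff, sub_eq_zero, eq_comm]

theorem metallic_comp_inv {J : V →ₗ[ℝ] V} {p q : ℝ} (hq : q ≠ 0)
    (hJ2 : ∀ X, J (J X) = p • J X + q • X) :
    J ∘ₗ (q⁻¹ • (J - p • LinearMap.id)) = LinearMap.id := by
  ext X
  simp [hJ2, smul_smul, hq]

theorem metallic_inv_comp {J : V →ₗ[ℝ] V} {p q : ℝ} (hq : q ≠ 0)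
    (hJ2 : ∀ X, J (J X) = p • J X + q • X) :
    (q⁻¹ • (J - p • LinearMap.id)) ∘ₗ J = LinearMap.id := by
  ext X
  simp [hJ2, smul_smul, hq]

noncomputable def metallicEquiv (J : V →ₗ[ℝ] V) (p q : ℝ) (hq : q ≠ 0)
    (hJ2 : ∀ X, J (J X) = p • J X + q • X) : V ≃ₗ[ℝ] V :=
  .ofLinearMap J _ (metallic_comp_inv hq hJ2) (metallic_inv_comp hq hJ2)

/-- (∇,J) is Codazzi-coupled iff ∇ and the J-conjugate connection
∇^J have equal torsion tensors. -/
theorem codazzi_iff_equal_torsion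
    (bracket D : V → V → V) (J : V →ₗ[ℝ] V) (p q : ℝ) (hq : q ≠ 0)
    (hJ2 : ∀ X, J (J X) = p • J X + q • X)
    (Jinv : V → V) (hJinv : ∀ X, Jinv X = q⁻¹ • (J X - p • X))
    (DJ : V → V → V) (hDJ : ∀ X Y, DJ X Y = Jinv (D X (J Y))) :
    (∀ X Y, covT D (⇑J) X Y = covT D (⇑J) Y X) ↔
      (∀ X Y, tors bracket D X Y = tors bracket DJ X Y) := by
  have hDJ_conj : DJ = conjConn D (metallicEquiv J p q hq hJ2) := by
    funext X Y
    simp [hDJ, hJinv, conjConn, metallicEquiv]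
  rw [hDJ_conj]
  exact codazzi_iff_tors_eq_tors_conjConn bracket D (metallicEquiv J p q hq hJ2)
end

section
/- Let J be a metallic structure on M with J² = pJ + qI, q ≠ 0, and ∇ a linear connection. Then (∇^J, J⁻¹) is Codazzi-coupled if and only if ∇ and ∇^J have equal torsions, where ∇^J_X Y = J⁻¹(∇_X(JY)). -/
variable {V : Type*} [AddCommGroup V] [Module ℝ V]

/-!
Since `J ∘ J⁻¹ = id`, the defining formula of `∇^J` gives `(∇^J_X J⁻¹) Y = J⁻¹ (∇_X Y - ∇^J_X Y)`.
As `J⁻¹` is injective, the Codazzi equation for `(∇^J, J⁻¹)` says exactly that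
`∇_X Y - ∇^J_X Y` is symmetric in `X, Y`, i.e. that `∇` and `∇^J` have the same torsion.
-/

section Metallic

variable {𝕜 E : Type*} [Field 𝕜] [AddCommGroup E] [Module 𝕜 E]

def metallicInv (J : E →ₗ[𝕜] E) (p q : 𝕜) : E →ₗ[𝕜] E := q⁻¹ • (J - p • LinearMap.id)

theorem metallicInv_apply (J : E →ₗ[𝕜] E) (p q : 𝕜) (X : E) :
    metallicInv J p q X = q⁻¹ • (J X - p • X) := rfl

theorem leftInverse_metallicInv {J : E →ₗ[𝕜] E} {p q : 𝕜} (hq : q ≠ 0)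
    (hJ2 : ∀ X, J (J X) = p • J X + q • X) : Function.LeftInverse J (metallicInv J p q) := by
  intro X
  rw [metallicInv_apply, map_smul, map_sub, map_smul, hJ2, add_sub_cancel_left, smul_smul,
    inv_mul_cancel₀ hq, one_smul]

end Metallic

theorem tors_eq_tors_iff {G : Type*} [AddCommGroup G] (bracket D D' : G → G → G) (X Y : G) :
    tors bracket D X Y = tors bracket D' X Y ↔ D X Y - D' X Y = D Y X - D' Y X := by
  rw [tors, tors, sub_left_inj]
  constructor <;> intro h <;> linear_combination (norm := abel) h

section ConjugateConnection

variable {D DJ : V → V → V} {T : V →ₗ[ℝ] V} {S : V → V}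

theorem covT_eq_of_leftInverse (hST : Function.LeftInverse S T)
    (hDJ : ∀ X Y, DJ X Y = T (D X (S Y))) (X Y : V) :
    covT DJ T X Y = T (D X Y - DJ X Y) := by
  rw [covT, hDJ X (T Y), hST, map_sub]

theorem codazzi_iff_tors_eq_of_leftInverse (bracket : V → V → V)
    (hST : Function.LeftInverse S T) (hDJ : ∀ X Y, DJ X Y = T (D X (S Y))) :
    (∀ X Y, covT DJ T X Y = covT DJ T Y X) ↔
      (∀ X Y, tors bracket D X Y = tors bracket DJ X Y) := by
  simp only [covT_eq_of_leftInverse hST hDJ, hST.injective.eq_iff, tors_eq_tors_iff]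

end ConjugateConnection

/-- (∇^J, J⁻¹) is Codazzi-coupled iff ∇ and ∇^J have equal torsions. -/
theorem codazziInv_iff_equal_torsion
    (bracket D : V → V → V) (J : V →ₗ[ℝ] V) (p q : ℝ) (hq : q ≠ 0)
    (hJ2 : ∀ X, J (J X) = p • J X + q • X)
    (Jinv : V → V) (hJinv : ∀ X, Jinv X = q⁻¹ • (J X - p • X))
    (DJ : V → V → V) (hDJ : ∀ X Y, DJ X Y = Jinv (D X (J Y))) :
    (∀ X Y, covT DJ Jinv X Y = covT DJ Jinv Y X) ↔
      (∀ X Y, tors bracket D X Y = tors bracket DJ X Y) := by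
  obtain rfl : Jinv = metallicInv J p q := funext hJinv
  exact codazzi_iff_tors_eq_of_leftInverse bracket (leftInverse_metallicInv hq hJ2) hDJ
end

section
/- Let (M, J, g) be a metallic pseudo-Riemannian manifold, G the twin metric, ∇* the g-conjugate and ∇† the G-conjugate of a linear connection ∇. If ∇ is a J-connection (∇J = 0), then both ∇* and ∇† are J-connections. -/
/-!
Differentiating `g(X, JY) = g(JX, Y)` along `Z` with the conjugacy relation shows that `∇*_Z J`
is the `g`-adjoint of `∇_Z J`, so `∇J = 0` forces `∇*J = 0` by nondegeneracy. The twin metric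
`G = g(J·, ·)` is again symmetric and nondegenerate with `J` self-adjoint, and `∇†` is the
`G`-conjugate of `∇`, so the same argument applies to it.
-/

variable {A : Type*} [CommRing A] [Algebra ℝ A]
variable {V : Type*} [AddCommGroup V] [Module ℝ V] [Module A V] [IsScalarTower ℝ A V]

/-- `covM Dact D h X Y Z = (D_Z h)(X,Y)`, the covariant derivative of a
(0,2)-tensor field `h`, where `Dact` is the action of vector fields on functions. -/
def covM (Dact : V → A → A) (D : V → V → V) (h : V → V → A) (X Y Z : V) : A :=
  Dact Z (h X Y) - h (D Z X) Y - h X (D Z Y)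

namespace LinearMap

section ConjugateConnection

variable {R M : Type*} [CommRing R] [AddCommGroup M] [Module R M]
  {act : M → R → R} {D Ds : M → M → M} {h : M →ₗ[R] M →ₗ[R] R} {T : M →ₗ[R] M}

theorem isAdjointPair_covT_conjugate (hT : h.IsSelfAdjoint T)
    (hDs : ∀ X Y Z, act Z (h X Y) = h (D Z X) Y + h X (Ds Z Y)) (Z : M) :
    h.IsAdjointPair h (covT D T Z) (covT Ds T Z) := by
  intro X Y
  have hXTY := hDs X (T Y) Z
  have hTXY := hDs (T X) Y Z
  rw [← hT X Y] at hXTY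
  simp only [covT, map_sub, sub_apply]
  linear_combination hXTY - hTXY - hT (D Z X) Y - hT X (Ds Z Y)

theorem conjugate_parallel (hsym : ∀ X Y, h X Y = h Y X) (hT : h.IsSelfAdjoint T)
    (hnd : h.SeparatingLeft) (hDs : ∀ X Y Z, act Z (h X Y) = h (D Z X) Y + h X (Ds Z Y))
    (hD : ∀ X Y, D X (T Y) = T (D X Y)) : ∀ X Y, Ds X (T Y) = T (Ds X Y) := by
  intro Z Y
  have hcov : covT D T Z = 0 := funext fun X ↦ sub_eq_zero.mpr (hD Z X)
  rw [← sub_eq_zero]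
  refine hnd _ fun X ↦ ?_
  rw [hsym, ← covT, ← isAdjointPair_covT_conjugate hT hDs Z X Y, hcov]
  exact map_zero₂ h Y

theorem comp_symm_of_isSelfAdjoint (hsym : ∀ X Y, h X Y = h Y X) (hT : h.IsSelfAdjoint T)
    (X Y : M) : h.comp T X Y = h.comp T Y X :=
  (hT X Y).trans (hsym X (T Y))

theorem isSelfAdjoint_comp_of_isSelfAdjoint (hT : h.IsSelfAdjoint T) :
    (h.comp T).IsSelfAdjoint T :=
  fun X Y ↦ hT (T X) Y

end ConjugateConnection

end LinearMap

theorem conjugates_are_J_connections_general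
    (Dact : V → A → A) (D Ds Dd : V → V → V)
    (g : V →ₗ[A] V →ₗ[A] A) (J : V →ₗ[A] V)
    (hsym : ∀ X Y, g X Y = g Y X)
    (hJsym : ∀ X Y, g (J X) Y = g X (J Y))
    (hnd : ∀ X, (∀ Y, g X Y = 0) → X = 0)
    (hGnd : ∀ X, (∀ Y, g (J X) Y = 0) → X = 0)
    (hDs : ∀ X Y Z, Dact Z (g X Y) = g (D Z X) Y + g X (Ds Z Y))
    (hDd : ∀ X Y Z, Dact Z (g (J X) Y) = g (J (D Z X)) Y + g (J X) (Dd Z Y))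
    (hJconn : ∀ X Y, D X (J Y) = J (D X Y)) :
    (∀ X Y, Ds X (J Y) = J (Ds X Y)) ∧ (∀ X Y, Dd X (J Y) = J (Dd X Y)) :=
  ⟨LinearMap.conjugate_parallel hsym hJsym hnd hDs hJconn,
    LinearMap.conjugate_parallel (LinearMap.comp_symm_of_isSelfAdjoint hsym hJsym)
      (LinearMap.isSelfAdjoint_comp_of_isSelfAdjoint hJsym) hGnd hDd hJconn⟩

/-- if ∇ is a J-connection, then the g-conjugate ∇* and the
G-conjugate ∇† are J-connections. -/
theorem conjugates_are_J_connections
    (Dact : V → A → A) (D Ds Dd : V → V → V)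
    (g : V →ₗ[A] V →ₗ[A] A) (J : V →ₗ[A] V) (p q : ℝ)
    (hsym : ∀ X Y, g X Y = g Y X)
    (hJsym : ∀ X Y, g (J X) Y = g X (J Y))
    (hJ2 : ∀ X, J (J X) = p • J X + q • X)
    (hnd : ∀ X, (∀ Y, g X Y = 0) → X = 0)
    (hGnd : ∀ X, (∀ Y, g (J X) Y = 0) → X = 0)
    (hDs : ∀ X Y Z, Dact Z (g X Y) = g (D Z X) Y + g X (Ds Z Y))
    (hDd : ∀ X Y Z, Dact Z (g (J X) Y) = g (J (D Z X)) Y + g (J X) (Dd Z Y))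
    (hJconn : ∀ X Y, D X (J Y) = J (D X Y)) :
    (∀ X Y, Ds X (J Y) = J (Ds X Y)) ∧ (∀ X Y, Dd X (J Y) = J (Dd X Y)) :=
  conjugates_are_J_connections_general Dact D Ds Dd g J hsym hJsym hnd hGnd hDs hDd hJconn
end

section
/- Let (M, J, g) be a metallic pseudo-Riemannian manifold and ∇ a torsion-free connection. If ∇J = 0 and (∇, g) is Codazzi-coupled, then Φ_J g = 0. -/
/-!
Write `C(a, b, c) = (∇_a g)(b, c)`. Torsion-freeness and `∇J = 0` turn the Lie derivatives in
`Φ_J g` into covariant derivatives, leaving `(Φ_J g)(X, Y, Z) = C(JX, Y, Z) - C(X, JY, Z)`.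
Since `J` is `g`-symmetric and parallel, `(∇_Z g)(JX, Y) = (∇_Z g)(X, JY)`; the Codazzi identity
moves the direction slot into the first one and back, so
`C(JX, Y, Z) = (∇_Z g)(JX, Y) = (∇_Z g)(X, JY) = C(X, JY, Z)`.
-/

variable {A : Type*} [CommRing A] [Algebra ℝ A]
variable {V : Type*} [AddCommGroup V] [Module ℝ V] [Module A V] [IsScalarTower ℝ A V]

/-- Tachibana operator (Φ_T g)(X,Y,Z) applied to the metric g, where
(L_X T)Y = [X,TY] − T[X,Y]. -/
def tachi (Dact : V → A → A) (bracket : V → V → V) (g : V → V → A)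
    (T : V → V) (X Y Z : V) : A :=
  Dact (T X) (g Y Z) - Dact X (g (T Y) Z)
    + g (bracket Y (T X) - T (bracket Y X)) Z
    + g Y (bracket Z (T X) - T (bracket Z X))

def CodazziCoupled (Dact : V → A → A) (D : V → V → V) (h : V → V → A) : Prop :=
  ∀ X Y Z, covM Dact D h Y Z X = covM Dact D h X Y Z

section Tachibana

variable {Dact : V → A → A} {D : V → V → V}

omit [Algebra ℝ A] [Module ℝ V] [IsScalarTower ℝ A V]

section

omit [AddCommGroup V] [Module A V]

theorem covM_apply_left_eq_apply_right {h : V → V → A} {J : V → V}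
    (hJsym : ∀ X Y, h (J X) Y = h X (J Y)) (hJconn : ∀ X Y, D X (J Y) = J (D X Y))
    (X Y Z : V) : covM Dact D h (J X) Y Z = covM Dact D h X (J Y) Z := by
  simp only [covM, hJconn, hJsym]

theorem CodazziCoupled.covM_apply_dir_eq_apply_left {h : V → V → A} {J : V → V}
    (hCod : CodazziCoupled Dact D h) (hJsym : ∀ X Y, h (J X) Y = h X (J Y))
    (hJconn : ∀ X Y, D X (J Y) = J (D X Y)) (X Y Z : V) :
    covM Dact D h Y Z (J X) = covM Dact D h (J Y) Z X :=
  calc covM Dact D h Y Z (J X) = covM Dact D h (J X) Y Z := hCod (J X) Y Z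
    _ = covM Dact D h X (J Y) Z := covM_apply_left_eq_apply_right hJsym hJconn X Y Z
    _ = covM Dact D h (J Y) Z X := (hCod X (J Y) Z).symm

end

theorem tachi_eq_covM_sub_covM {bracket : V → V → V} (g : V →ₗ[A] V →ₗ[A] A) (J : V →ₗ[A] V)
    (hJsym : ∀ X Y, g (J X) Y = g X (J Y)) (htf : ∀ X Y, D X Y - D Y X = bracket X Y)
    (hJconn : ∀ X Y, D X (J Y) = J (D X Y)) (X Y Z : V) :
    tachi Dact bracket (fun a b => g a b) J X Y Z
      = covM Dact D (fun a b => g a b) Y Z (J X) - covM Dact D (fun a b => g a b) (J Y) Z X := by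
  simp only [tachi, covM, ← htf, hJconn, hJsym, map_sub, LinearMap.sub_apply]
  ring

end Tachibana

theorem tachibana_vanishes_general
    (Dact : V → A → A) (bracket D : V → V → V)
    (g : V →ₗ[A] V →ₗ[A] A) (J : V →ₗ[A] V)
    (hJsym : ∀ X Y, g (J X) Y = g X (J Y))
    (htf : ∀ X Y, D X Y - D Y X = bracket X Y)
    (hJconn : ∀ X Y, D X (J Y) = J (D X Y))
    -- (∇,g) Codazzi-coupled: (∇_X g)(Y,Z) = (∇_Z g)(X,Y)
    (hCodg : ∀ X Y Z, covM Dact D (fun a b => g a b) Y Z X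
      = covM Dact D (fun a b => g a b) X Y Z) :
    ∀ X Y Z, tachi Dact bracket (fun a b => g a b) (⇑J) X Y Z = 0 := by
  intro X Y Z
  have hCod : CodazziCoupled Dact D (fun a b => g a b) := hCodg
  rw [tachi_eq_covM_sub_covM g J hJsym htf hJconn,
    hCod.covM_apply_dir_eq_apply_left hJsym hJconn, sub_self]

/-- for a torsion-free ∇ with ∇J = 0 and (∇,g) Codazzi-coupled,
Φ_J g = 0. -/
theorem tachibana_vanishes
    (Dact : V → A → A) (bracket D : V → V → V)
    (g : V →ₗ[A] V →ₗ[A] A) (J : V →ₗ[A] V) (p q : ℝ)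
    (hsym : ∀ X Y, g X Y = g Y X)
    (hJsym : ∀ X Y, g (J X) Y = g X (J Y))
    (hJ2 : ∀ X, J (J X) = p • J X + q • X)
    (htf : ∀ X Y, D X Y - D Y X = bracket X Y)
    (hJconn : ∀ X Y, D X (J Y) = J (D X Y))
    -- (∇,g) Codazzi-coupled: (∇_X g)(Y,Z) = (∇_Z g)(X,Y)
    (hCodg : ∀ X Y Z, covM Dact D (fun a b => g a b) Y Z X
      = covM Dact D (fun a b => g a b) X Y Z) :
    ∀ X Y Z, tachi Dact bracket (fun a b => g a b) (⇑J) X Y Z = 0 :=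
  tachibana_vanishes_general Dact bracket D g J hJsym htf hJconn hCodg
end

section
/- Let (M, J, g) be a metallic pseudo-Riemannian manifold and ∇*′ the generalized conjugate connection of ∇ with respect to g by a 1-form τ, defined by X g(Y,Z) = g(∇_X Y, Z) + g(Y, ∇*′_X Z) − τ(X) g(Y,Z). Then ∇ is a J-connection if and only if ∇*′ is a J-connection. Moreover (∇*′)*′ = ∇. -/
/-!
Once `g` is symmetric, the defining identity of the generalized conjugate is symmetric in the
two connections, so `∇` is the generalized conjugate of `∇*′`; nondegeneracy of `g` makes the
generalized conjugate unique, whence `(∇*′)*′ = ∇`. Since `J` is `g`-self-adjoint it can be moved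
across `g` in the defining identity, which turns `∇J = 0` into `∇*′J = 0`; the converse follows by
the symmetry.
-/

variable {A : Type*} [CommRing A] [Algebra ℝ A]
variable {V : Type*} [AddCommGroup V] [Module ℝ V] [Module A V] [IsScalarTower ℝ A V]

theorem LinearMap.SeparatingRight.eq_of_forall_apply_eq {R M N P : Type*} [CommSemiring R]
    [AddCommGroup M] [Module R M] [AddCommGroup N] [Module R N] [AddCommGroup P] [Module R P]
    {B : M →ₗ[R] N →ₗ[R] P} (hB : B.SeparatingRight) {y₁ y₂ : N}
    (h : ∀ x, B x y₁ = B x y₂) : y₁ = y₂ :=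
  sub_eq_zero.mp <| hB _ fun x => by rw [map_sub, h, sub_self]

def IsParallel {M : Type*} (D : M → M → M) (T : M → M) : Prop :=
  ∀ X Y, D X (T Y) = T (D X Y)

section GeneralizedConjugate

variable {R M : Type*} [CommRing R] [AddCommGroup M] [Module R M]
  {act : M → R → R} {g : M →ₗ[R] M →ₗ[R] R} {τ : M → R} {D D' D'' : M → M → M}

variable (act g τ D D') in
/-- `D'` is the generalized conjugate `∇*′` of `D = ∇` with respect to `g` by the 1-form `τ`;
`act X f` is the derivative `X f` of a function `f` along the vector field `X`. -/
def IsGeneralizedConjugate : Prop :=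
  ∀ X Y Z, act X (g Y Z) = g (D X Y) Z + g Y (D' X Z) - τ X * g Y Z

theorem IsGeneralizedConjugate.symm (hsym : ∀ X Y, g X Y = g Y X)
    (h : IsGeneralizedConjugate act g τ D D') : IsGeneralizedConjugate act g τ D' D := by
  intro X Y Z
  rw [hsym Y Z, h X Z Y, hsym (D X Z), hsym Z]
  ring

theorem IsGeneralizedConjugate.unique (hg : g.SeparatingRight)
    (h' : IsGeneralizedConjugate act g τ D D') (h'' : IsGeneralizedConjugate act g τ D D'') :
    D' = D'' := by
  funext X Z
  refine hg.eq_of_forall_apply_eq fun Y => ?_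
  linear_combination h'' X Y Z - h' X Y Z

theorem IsGeneralizedConjugate.isParallel (hg : g.SeparatingRight) {J : M → M}
    (hJ : ∀ X Y, g (J X) Y = g X (J Y)) (h : IsGeneralizedConjugate act g τ D D')
    (hD : IsParallel D J) : IsParallel D' J := by
  intro X Z
  refine hg.eq_of_forall_apply_eq fun Y => ?_
  have hJY := h X (J Y) Z
  rw [hD, hJ, hJ, hJ] at hJY
  linear_combination hJY - h X Y (J Z)

end GeneralizedConjugate

theorem generalized_conjugate_J_connection_general
    (Dact : V → A → A) (D Ds Dss : V → V → V)
    (g : V →ₗ[A] V →ₗ[A] A) (J : V →ₗ[A] V) (tau : V →ₗ[A] A)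
    (hsym : ∀ X Y, g X Y = g Y X)
    (hJsym : ∀ X Y, g (J X) Y = g X (J Y))
    (hnd : ∀ X, (∀ Y, g X Y = 0) → X = 0)
    (hDs : ∀ X Y Z, Dact X (g Y Z) = g (D X Y) Z + g Y (Ds X Z) - tau X * g Y Z)
    (hDss : ∀ X Y Z, Dact X (g Y Z) = g (Ds X Y) Z + g Y (Dss X Z) - tau X * g Y Z) :
    ((∀ X Y, D X (J Y) = J (D X Y)) ↔ (∀ X Y, Ds X (J Y) = J (Ds X Y))) ∧
      (∀ X Y, Dss X Y = D X Y) := by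
  have hg : g.SeparatingRight := fun Y hY => hnd Y fun X => (hsym Y X).trans (hY X)
  have hconj : IsGeneralizedConjugate Dact g tau D Ds := hDs
  refine ⟨⟨hconj.isParallel hg hJsym, (hconj.symm hsym).isParallel hg hJsym⟩, ?_⟩
  exact congrFun₂ (IsGeneralizedConjugate.unique hg hDss (hconj.symm hsym))

/-- ∇ is a J-connection iff its generalized g-conjugate ∇*′ (by a
1-form τ) is a J-connection; moreover (∇*′)*′ = ∇. -/
theorem generalized_conjugate_J_connection
    (Dact : V → A → A) (D Ds Dss : V → V → V)
    (g : V →ₗ[A] V →ₗ[A] A) (J : V →ₗ[A] V) (p q : ℝ) (tau : V →ₗ[A] A)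
    (hsym : ∀ X Y, g X Y = g Y X)
    (hJsym : ∀ X Y, g (J X) Y = g X (J Y))
    (hJ2 : ∀ X, J (J X) = p • J X + q • X)
    (hnd : ∀ X, (∀ Y, g X Y = 0) → X = 0)
    (hDs : ∀ X Y Z, Dact X (g Y Z) = g (D X Y) Z + g Y (Ds X Z) - tau X * g Y Z)
    (hDss : ∀ X Y Z, Dact X (g Y Z) = g (Ds X Y) Z + g Y (Dss X Z) - tau X * g Y Z) :
    ((∀ X Y, D X (J Y) = J (D X Y)) ↔ (∀ X Y, Ds X (J Y) = J (Ds X Y))) ∧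
      (∀ X Y, Dss X Y = D X Y) :=
  generalized_conjugate_J_connection_general Dact D Ds Dss g J tau hsym hJsym hnd hDs hDss
end

section
/- Let (M, J, g) be a metallic pseudo-Riemannian manifold (q ≠ 0) and ∇*′ the generalized conjugate connection of ∇ with respect to g by a 1-form τ. Then ∇*′ is the generalized conjugate connection of ∇^J with respect to the twin metric G by τ, i.e., X G(Y,Z) = G(∇^J_X Y, Z) + G(Y, ∇*′_X Z) − τ(X) G(Y,Z), where ∇^J_X Y = J⁻¹(∇_X(JY)) and G(X,Y) = g(JX,Y). -/
/-!
Since `J J⁻¹ = id`, the twin metric evaluated on `∇^J_X Y` is `G(∇^J_X Y, Z) = g(∇_X (JY), Z)`,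
so the claim is the defining identity of `∇*′` applied to the vector fields `X`, `JY`, `Z`.
-/

variable {A : Type*} [CommRing A] [Algebra ℝ A]
variable {V : Type*} [AddCommGroup V] [Module ℝ V] [Module A V] [IsScalarTower ℝ A V]

theorem LinearMap.apply_inv_smul_sub_smul_eq_self {K W : Type*} [Field K] [AddCommGroup W]
    [Module K W] (J : W →ₗ[K] W) {p q : K} (hq : q ≠ 0)
    (hJ2 : ∀ X, J (J X) = p • J X + q • X) (X : W) :
    J (q⁻¹ • (J X - p • X)) = X := by
  rw [map_smul, map_sub, map_smul, hJ2, add_sub_cancel_left, smul_smul, inv_mul_cancel₀ hq,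
    one_smul]

theorem generalized_conjugate_twin_general
    (Dact : V → A → A) (D Ds : V → V → V)
    (g : V →ₗ[A] V →ₗ[A] A) (J : V →ₗ[A] V) (p q : ℝ) (hq : q ≠ 0)
    (tau : V →ₗ[A] A)
    (hJ2 : ∀ X, J (J X) = p • J X + q • X)
    (hDs : ∀ X Y Z, Dact X (g Y Z) = g (D X Y) Z + g Y (Ds X Z) - tau X * g Y Z)
    (Jinv : V → V) (hJinv : ∀ X, Jinv X = q⁻¹ • (J X - p • X))
    (DJ : V → V → V) (hDJ : ∀ X Y, DJ X Y = Jinv (D X (J Y))) :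
    ∀ X Y Z, Dact X (g (J Y) Z)
      = g (J (DJ X Y)) Z + g (J Y) (Ds X Z) - tau X * g (J Y) Z := by
  intro X Y Z
  have hJ_DJ : J (DJ X Y) = D X (J Y) := by
    rw [hDJ, hJinv]
    exact (J.restrictScalars ℝ).apply_inv_smul_sub_smul_eq_self hq hJ2 _
  rw [hJ_DJ, hDs]

/-- the generalized g-conjugate ∇*′ of ∇ by τ is the generalized
G-conjugate of ∇^J by τ, where G(X,Y) = g(JX,Y) and ∇^J_X Y = J⁻¹(∇_X(JY)). -/
theorem generalized_conjugate_twin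
    (Dact : V → A → A) (D Ds : V → V → V)
    (g : V →ₗ[A] V →ₗ[A] A) (J : V →ₗ[A] V) (p q : ℝ) (hq : q ≠ 0)
    (tau : V →ₗ[A] A)
    (hsym : ∀ X Y, g X Y = g Y X)
    (hJsym : ∀ X Y, g (J X) Y = g X (J Y))
    (hJ2 : ∀ X, J (J X) = p • J X + q • X)
    (hDs : ∀ X Y Z, Dact X (g Y Z) = g (D X Y) Z + g Y (Ds X Z) - tau X * g Y Z)
    (Jinv : V → V) (hJinv : ∀ X, Jinv X = q⁻¹ • (J X - p • X))
    (DJ : V → V → V) (hDJ : ∀ X Y, DJ X Y = Jinv (D X (J Y))) :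
    ∀ X Y Z, Dact X (g (J Y) Z)
      = g (J (DJ X Y)) Z + g (J Y) (Ds X Z) - tau X * g (J Y) Z :=
  generalized_conjugate_twin_general Dact D Ds g J p q hq tau hJ2 hDs Jinv hJinv DJ hDJ
end

section
/- Let (M, J, g) be a metallic-like pseudo-Riemannian manifold, i.e., g(JX,Y) = g(X, J*Y) with (J*)* = J and J² = pJ + qI. If ∇ is torsion-free, (∇, g) is Codazzi-coupled, ∇J = 0 and ∇J* = 0, then (Φ_{J*} g)(X,Y,Z) = g(Y, (J* − J)∇_X Z), (Φ_J g)(X,Y,Z) = g(Y, (J − J*)∇_X Z), and hence (Φ_{J*} g)(X,Y,Z) + (Φ_J g)(X,Y,Z) = 0. -/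
variable {A : Type*} [CommRing A] [Algebra ℝ A]
variable {V : Type*} [AddCommGroup V] [Module ℝ V] [Module A V] [IsScalarTower ℝ A V]

/-! Write `C(X,Y,Z) = (∇_X g)(Y,Z)`, i.e. `covM Dact D g Y Z X`. Torsion-freeness turns the
Lie derivatives in `Φ_T g` into covariant ones, and for a parallel `T` this gives
`(Φ_T g)(X,Y,Z) = C(TX,Y,Z) - C(X,TY,Z) - g(TY,∇_X Z) + g(Y,T∇_X Z)`.
For `T = J*` the two `C`-terms cancel: Codazzi coupling and the symmetry of `g` make `C` totally
symmetric, and parallelism of `J`, `J*` lets `J*` in one slot of `C` move to `J` in another. What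
remains is `g(Y,(J* - J)∇_X Z)`; exchanging the roles of `J` and `J*` gives the formula for `Φ_J g`. -/

section

omit [Algebra ℝ A] [Module ℝ V] [IsScalarTower ℝ A V]

variable (Dact : V → A → A) (bracket D : V → V → V) (g : V →ₗ[A] V →ₗ[A] A)

theorem tachi_eq_of_torsionFree (T : V →ₗ[A] V)
    (htf : ∀ X Y, D X Y - D Y X = bracket X Y) (hTconn : ∀ X Y, D X (T Y) = T (D X Y))
    (X Y Z : V) :
    tachi Dact bracket (fun a b => g a b) T X Y Z
      = covM Dact D (fun a b => g a b) Y Z (T X) - covM Dact D (fun a b => g a b) (T Y) Z X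
        - g (T Y) (D X Z) + g Y (T (D X Z)) := by
  simp only [tachi, covM, ← htf, hTconn, map_sub, LinearMap.sub_apply]
  ring

variable {Dact D g}

theorem covM_comm (hsym : ∀ X Y, g X Y = g Y X) (X Y Z : V) :
    covM Dact D (fun a b => g a b) X Y Z = covM Dact D (fun a b => g a b) Y X Z := by
  simp only [covM, hsym X Y, hsym (D Z X) Y, hsym X (D Z Y)]
  ring

theorem covM_map_adjoint {J Js : V →ₗ[A] V} (hadj : ∀ X Y, g (J X) Y = g X (Js Y))
    (hJconn : ∀ X Y, D X (J Y) = J (D X Y)) (hJsconn : ∀ X Y, D X (Js Y) = Js (D X Y))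
    (X Y Z : V) :
    covM Dact D (fun a b => g a b) X (Js Y) Z = covM Dact D (fun a b => g a b) (J X) Y Z := by
  simp only [covM, hadj, hJconn, hJsconn]

theorem covM_adjoint_of_codazzi {J Js : V →ₗ[A] V} (hsym : ∀ X Y, g X Y = g Y X)
    (hadj : ∀ X Y, g (J X) Y = g X (Js Y))
    (hCodg : ∀ X Y Z, covM Dact D (fun a b => g a b) Y Z X
      = covM Dact D (fun a b => g a b) X Y Z)
    (hJconn : ∀ X Y, D X (J Y) = J (D X Y)) (hJsconn : ∀ X Y, D X (Js Y) = Js (D X Y))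
    (X Y Z : V) :
    covM Dact D (fun a b => g a b) Y Z (Js X) = covM Dact D (fun a b => g a b) (Js Y) Z X := by
  have hmap := covM_map_adjoint hadj hJconn hJsconn (Dact := Dact)
  calc covM Dact D (fun a b => g a b) Y Z (Js X)
      = covM Dact D (fun a b => g a b) Z (Js X) Y := (hCodg _ _ _).symm
    _ = covM Dact D (fun a b => g a b) (J Z) X Y := hmap _ _ _
    _ = covM Dact D (fun a b => g a b) Y (J Z) X := hCodg _ _ _
    _ = covM Dact D (fun a b => g a b) (J Z) Y X := covM_comm hsym _ _ _
    _ = covM Dact D (fun a b => g a b) Z (Js Y) X := (hmap _ _ _).symm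
    _ = covM Dact D (fun a b => g a b) (Js Y) Z X := covM_comm hsym _ _ _

theorem tachi_adjoint_of_codazzi {J Js : V →ₗ[A] V} (hsym : ∀ X Y, g X Y = g Y X)
    (hadj : ∀ X Y, g (J X) Y = g X (Js Y)) (hadj2 : ∀ X Y, g (Js X) Y = g X (J Y))
    (htf : ∀ X Y, D X Y - D Y X = bracket X Y)
    (hCodg : ∀ X Y Z, covM Dact D (fun a b => g a b) Y Z X
      = covM Dact D (fun a b => g a b) X Y Z)
    (hJconn : ∀ X Y, D X (J Y) = J (D X Y)) (hJsconn : ∀ X Y, D X (Js Y) = Js (D X Y))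
    (X Y Z : V) :
    tachi Dact bracket (fun a b => g a b) Js X Y Z = g Y (Js (D X Z) - J (D X Z)) := by
  rw [tachi_eq_of_torsionFree Dact bracket D g Js htf hJsconn,
    covM_adjoint_of_codazzi hsym hadj hCodg hJconn hJsconn, hadj2, map_sub]
  ring

end

theorem metallic_like_tachibana_general
    (Dact : V → A → A) (bracket D : V → V → V)
    (g : V →ₗ[A] V →ₗ[A] A) (J Js : V →ₗ[A] V)
    (hsym : ∀ X Y, g X Y = g Y X)
    (hadj : ∀ X Y, g (J X) Y = g X (Js Y))
    (hadj2 : ∀ X Y, g (Js X) Y = g X (J Y))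
    (htf : ∀ X Y, D X Y - D Y X = bracket X Y)
    (hCodg : ∀ X Y Z, covM Dact D (fun a b => g a b) Y Z X
      = covM Dact D (fun a b => g a b) X Y Z)
    (hJconn : ∀ X Y, D X (J Y) = J (D X Y))
    (hJsconn : ∀ X Y, D X (Js Y) = Js (D X Y)) :
    (∀ X Y Z, tachi Dact bracket (fun a b => g a b) (⇑Js) X Y Z
        = g Y (Js (D X Z) - J (D X Z))) ∧
      (∀ X Y Z, tachi Dact bracket (fun a b => g a b) (⇑J) X Y Z
        = g Y (J (D X Z) - Js (D X Z))) ∧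
      (∀ X Y Z, tachi Dact bracket (fun a b => g a b) (⇑Js) X Y Z
        + tachi Dact bracket (fun a b => g a b) (⇑J) X Y Z = 0) := by
  have hJs := tachi_adjoint_of_codazzi bracket hsym hadj hadj2 htf hCodg hJconn hJsconn
  have hJ := tachi_adjoint_of_codazzi bracket hsym hadj2 hadj htf hCodg hJsconn hJconn
  refine ⟨hJs, hJ, fun X Y Z => ?_⟩
  rw [hJs, hJ, ← map_add]
  simp

/-- on a metallic-like pseudo-Riemannian manifold, if ∇ is
torsion-free, (∇,g) is Codazzi-coupled, ∇J = 0 and ∇J* = 0, then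
(Φ_{J*} g)(X,Y,Z) = g(Y,(J*−J)∇_X Z), (Φ_J g)(X,Y,Z) = g(Y,(J−J*)∇_X Z), and
their sum vanishes. -/
theorem metallic_like_tachibana
    (Dact : V → A → A) (bracket D : V → V → V)
    (g : V →ₗ[A] V →ₗ[A] A) (J Js : V →ₗ[A] V) (p q : ℝ)
    (hsym : ∀ X Y, g X Y = g Y X)
    (hadj : ∀ X Y, g (J X) Y = g X (Js Y))
    (hadj2 : ∀ X Y, g (Js X) Y = g X (J Y))
    (hJ2 : ∀ X, J (J X) = p • J X + q • X)
    (htf : ∀ X Y, D X Y - D Y X = bracket X Y)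
    (hCodg : ∀ X Y Z, covM Dact D (fun a b => g a b) Y Z X
      = covM Dact D (fun a b => g a b) X Y Z)
    (hJconn : ∀ X Y, D X (J Y) = J (D X Y))
    (hJsconn : ∀ X Y, D X (Js Y) = Js (D X Y)) :
    (∀ X Y Z, tachi Dact bracket (fun a b => g a b) (⇑Js) X Y Z
        = g Y (Js (D X Z) - J (D X Z))) ∧
      (∀ X Y Z, tachi Dact bracket (fun a b => g a b) (⇑J) X Y Z
        = g Y (J (D X Z) - Js (D X Z))) ∧
      (∀ X Y Z, tachi Dact bracket (fun a b => g a b) (⇑Js) X Y Z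
        + tachi Dact bracket (fun a b => g a b) (⇑J) X Y Z = 0) :=
  metallic_like_tachibana_general Dact bracket D g J Js hsym hadj hadj2 htf hCodg hJconn hJsconn
end
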